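/- Let B = !![a, b; c, d] ∈ SL₂(ℤ) and let φ, ψ ∈ ℝ² satisfy φ(B+I) ∈ ℤ² and ψ(B+I) ∈ ℤ². Let (p, q) ∈ ℤ² satisfy (φ − ψ)(B+I)·(p,q)ᵀ = 0. Then for every t ∈ [0,1], the point φ_t = (1−t)φ + tψ satisfies φ_t(B+I)·(p,q)ᵀ ∈ ℤ, and consequently, writing X_t = u(2πφ_{t,1}), Y_t = u(2πφ_{t,2}), the quaternion relation j·(X_tᵖ · Y_tᵠ)·j⁻¹ = X_t^{pa+qb} · Y_t^{pc+qd} holds; hence for each t there is a homomorphism from the presented group ⟨x, y, τ ∣ [x,y] = 1, τ xᵖyᵠ τ⁻¹ = x^{pa+qb} y^{pc+qd}⟩ to the unit quaternions sending x ↦ X_t, y ↦ Y_t, τ ↦ j. -/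

import Mathlib

open Real

/-- The unit quaternion `cos θ + (sin θ) i`. -/
noncomputable def uq (θ : ℝ) : Quaternion ℝ := ⟨Real.cos θ, Real.sin θ, 0, 0⟩

/-- The quaternion unit `j`. -/
def jq : Quaternion ℝ := ⟨0, 0, 1, 0⟩

/-- The row vector `φ(B+I)` for `B = !![a, b; c, d]`. -/
noncomputable def rowBI (a b c d : ℤ) (v : ℝ × ℝ) : ℝ × ℝ :=
  (((a : ℝ) + 1) * v.1 + (c : ℝ) * v.2, (b : ℝ) * v.1 + ((d : ℝ) + 1) * v.2)

/-- The pairing of a real row vector with an integer column vector `(p, q)ᵀ`. -/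
noncomputable def dotZ (v : ℝ × ℝ) (p q : ℤ) : ℝ := v.1 * (p : ℝ) + v.2 * (q : ℝ)

/-- Relations for the presented group
`⟨x, y, τ ∣ [x,y] = 1, τ xᵖyᵠ τ⁻¹ = x^{pa+qb} y^{pc+qd}⟩`, the fundamental group of
the knot complement `M - N_γ`, on generators `x = 0`, `y = 1`, `τ = 2`. -/
def knotComplementRels (a b c d p q : ℤ) : Set (FreeGroup (Fin 3)) :=
  { FreeGroup.of 0 * FreeGroup.of 1 * (FreeGroup.of 0)⁻¹ * (FreeGroup.of 1)⁻¹,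
    FreeGroup.of 2 * ((FreeGroup.of 0) ^ p * (FreeGroup.of 1) ^ q) * (FreeGroup.of 2)⁻¹ *
      ((FreeGroup.of 0) ^ (p * a + q * b) * (FreeGroup.of 1) ^ (p * c + q * d))⁻¹ }

lemma uq_mul (x y : ℝ) : uq x * uq y = uq (x + y) := by
  ext <;> simp only [Quaternion.re_mul, Quaternion.imI_mul, Quaternion.imJ_mul, Quaternion.imK_mul, Quaternion.re_neg, Quaternion.imI_neg, Quaternion.imJ_neg, Quaternion.imK_neg, Quaternion.re_one, Quaternion.imI_one, Quaternion.imJ_one, Quaternion.imK_one] <;> simp [uq, Real.cos_add, Real.sin_add] <;> ring_nf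

lemma norm_eq_one_of_normSq {z : Quaternion ℝ} (h : Quaternion.normSq z = 1) : ‖z‖ = 1 := by
  have h2 := Quaternion.normSq_eq_norm_mul_self z
  rw [h] at h2
  nlinarith [norm_nonneg z]

lemma uq_norm (x : ℝ) : ‖uq x‖ = 1 := by
  apply norm_eq_one_of_normSq
  rw [Quaternion.normSq_def']; simp [uq, Real.sin_sq_add_cos_sq]

lemma jq_norm : ‖jq‖ = 1 := by
  apply norm_eq_one_of_normSq; rw [Quaternion.normSq_def']; simp [jq]

lemma jq_inv : jq⁻¹ = -jq := by
  apply inv_eq_of_mul_eq_one_right; ext <;> simp only [Quaternion.re_mul, Quaternion.imI_mul, Quaternion.imJ_mul, Quaternion.imK_mul, Quaternion.re_neg, Quaternion.imI_neg, Quaternion.imJ_neg, Quaternion.imK_neg, Quaternion.re_one, Quaternion.imI_one, Quaternion.imJ_one, Quaternion.imK_one] <;> simp [jq]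

lemma jq_uq (x : ℝ) : jq * uq x * jq⁻¹ = uq (-x) := by
  rw [jq_inv]
  ext <;> simp only [Quaternion.re_mul, Quaternion.imI_mul, Quaternion.imJ_mul, Quaternion.imK_mul, Quaternion.re_neg, Quaternion.imI_neg, Quaternion.imJ_neg, Quaternion.imK_neg, Quaternion.re_one, Quaternion.imI_one, Quaternion.imJ_one, Quaternion.imK_one] <;> simp [jq, uq]

lemma uq_zero : uq 0 = 1 := by ext <;> simp only [Quaternion.re_mul, Quaternion.imI_mul, Quaternion.imJ_mul, Quaternion.imK_mul, Quaternion.re_neg, Quaternion.imI_neg, Quaternion.imJ_neg, Quaternion.imK_neg, Quaternion.re_one, Quaternion.imI_one, Quaternion.imJ_one, Quaternion.imK_one] <;> simp [uq]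

lemma uq_zpow (x : ℝ) (n : ℤ) : uq x ^ n = uq (n * x) := by
  have hnat : ∀ m : ℕ, uq x ^ m = uq (m * x) := by
    intro m; induction m with
    | zero => simp [uq_zero]
    | succ k ih => rw [pow_succ, ih, uq_mul]; push_cast; ring_nf
  induction n using Int.rec with
  | ofNat m => simpa using hnat m
  | negSucc m =>
      rw [zpow_negSucc, hnat]
      apply inv_eq_of_mul_eq_one_right
      rw [uq_mul]
      rw [show ((m+1:ℕ):ℝ) * x + ((Int.negSucc m):ℤ) * x = 0 by push_cast [Int.negSucc_eq]; ring]
      exact uq_zero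

lemma uq_periodic (x : ℝ) (n : ℤ) : uq (x + 2 * π * n) = uq x := by
  have hc : Real.cos (x + 2*π*n) = Real.cos x := by
    rw [show x + 2*π*n = x + n*(2*π) by ring, Real.cos_add_int_mul_two_pi]
  have hs : Real.sin (x + 2*π*n) = Real.sin x := by
    rw [show x + 2*π*n = x + n*(2*π) by ring, Real.sin_add_int_mul_two_pi]
  ext <;> simp [uq, hc, hs]
lemma exists_hom_aux {G : Type*} [Group G] (a b c d p q : ℤ) (X Y T : G)
    (hcomm : X * Y = Y * X)
    (hrelS : T * (X ^ p * Y ^ q) * T⁻¹ = X ^ (p * a + q * b) * Y ^ (p * c + q * d)) :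
    ∃ ρ : PresentedGroup (knotComplementRels a b c d p q) →* G,
      ρ (PresentedGroup.of 0) = X ∧ ρ (PresentedGroup.of 1) = Y ∧
        ρ (PresentedGroup.of 2) = T := by
  set f : Fin 3 → G := ![X, Y, T] with hf
  have hf0 : f 0 = X := rfl
  have hf1 : f 1 = Y := rfl
  have hf2 : f 2 = T := rfl
  have hrels : ∀ r ∈ knotComplementRels a b c d p q, FreeGroup.lift f r = 1 := by
    intro r hr
    rcases hr with hr | hr
    · subst hr
      simp only [map_mul, map_inv, FreeGroup.lift_apply_of, hf0, hf1]
      rw [hcomm]; group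
    · rw [Set.mem_singleton_iff] at hr
      subst hr
      simp only [map_mul, map_inv, map_zpow, FreeGroup.lift_apply_of, hf0, hf1, hf2]
      rw [hrelS]; group
  exact ⟨PresentedGroup.toGroup hrels,
    by rw [PresentedGroup.toGroup.of, hf0],
    by rw [PresentedGroup.toGroup.of, hf1],
    by rw [PresentedGroup.toGroup.of, hf2]⟩

/-- if `φ(B+I), ψ(B+I) ∈ ℤ²` and `(φ - ψ)(B+I)·(p,q)ᵀ = 0`, then along the
segment `φ_t = (1-t)φ + tψ` one has `φ_t(B+I)·(p,q)ᵀ ∈ ℤ`, the quaternion relation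
`j (X_tᵖ Y_tᵠ) j⁻¹ = X_t^{pa+qb} Y_t^{pc+qd}` holds, and there is a homomorphism from
`π₁(M - N_γ)` to the unit quaternions sending `x ↦ X_t`, `y ↦ Y_t`, `τ ↦ j`. -/
theorem path_of_knot_complement_reps (a b c d : ℤ)
    (hdet : (!![a, b; c, d] : Matrix (Fin 2) (Fin 2) ℤ).det = 1)
    (φ ψ : ℝ × ℝ)
    (hφ : (∃ n : ℤ, (rowBI a b c d φ).1 = n) ∧ (∃ n : ℤ, (rowBI a b c d φ).2 = n))
    (hψ : (∃ n : ℤ, (rowBI a b c d ψ).1 = n) ∧ (∃ n : ℤ, (rowBI a b c d ψ).2 = n))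
    (p q : ℤ) (hpq : dotZ (rowBI a b c d (φ - ψ)) p q = 0) :
    ∀ t ∈ Set.Icc (0 : ℝ) 1,
      (∃ n : ℤ, dotZ (rowBI a b c d ((1 - t) • φ + t • ψ)) p q = n) ∧
      (jq * (uq (2 * π * ((1 - t) * φ.1 + t * ψ.1)) ^ p *
            uq (2 * π * ((1 - t) * φ.2 + t * ψ.2)) ^ q) * jq⁻¹ =
        uq (2 * π * ((1 - t) * φ.1 + t * ψ.1)) ^ (p * a + q * b) *
          uq (2 * π * ((1 - t) * φ.2 + t * ψ.2)) ^ (p * c + q * d)) ∧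
      (∃ ρ : PresentedGroup (knotComplementRels a b c d p q) →*
          Metric.sphere (0 : Quaternion ℝ) 1,
        (ρ (PresentedGroup.of 0) : Quaternion ℝ) = uq (2 * π * ((1 - t) * φ.1 + t * ψ.1)) ∧
        (ρ (PresentedGroup.of 1) : Quaternion ℝ) = uq (2 * π * ((1 - t) * φ.2 + t * ψ.2)) ∧
        (ρ (PresentedGroup.of 2) : Quaternion ℝ) = jq) := by
  intro t _
  obtain ⟨⟨n1, h1⟩, ⟨n2, h2⟩⟩ := hφ
  set x1 : ℝ := 2 * π * ((1 - t) * φ.1 + t * ψ.1) with hx1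
  set x2 : ℝ := 2 * π * ((1 - t) * φ.2 + t * ψ.2) with hx2
  -- Part 1: integrality
  have hn : dotZ (rowBI a b c d ((1 - t) • φ + t • ψ)) p q = ((p * n1 + q * n2 : ℤ) : ℝ) := by
    simp only [dotZ, rowBI, Prod.fst_add, Prod.snd_add, Prod.smul_fst, Prod.smul_snd,
      Prod.fst_sub, Prod.snd_sub, smul_eq_mul] at *
    push_cast
    linear_combination (p : ℝ) * h1 + (q : ℝ) * h2 - t * hpq
  -- Key real identity for the quaternion relation
  have key : ((p * a + q * b : ℤ) : ℝ) * x1 + ((p * c + q * d : ℤ) : ℝ) * x2 =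
      -((p : ℝ) * x1 + (q : ℝ) * x2) + 2 * π * ((p * n1 + q * n2 : ℤ) : ℝ) := by
    simp only [dotZ, rowBI, Prod.fst_add, Prod.snd_add, Prod.smul_fst, Prod.smul_snd,
      smul_eq_mul] at hn
    rw [hx1, hx2]
    push_cast at hn ⊢
    linear_combination 2 * π * hn
  have hrel : jq * (uq x1 ^ p * uq x2 ^ q) * jq⁻¹ =
      uq x1 ^ (p * a + q * b) * uq x2 ^ (p * c + q * d) := by
    rw [uq_zpow, uq_zpow, uq_mul, jq_uq, uq_zpow, uq_zpow, uq_mul, key, uq_periodic]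
  refine ⟨⟨p * n1 + q * n2, hn⟩, hrel, ?_⟩
  -- Part 3: the homomorphism
  have memuq : ∀ y : ℝ, uq y ∈ Metric.sphere (0 : Quaternion ℝ) 1 := fun y => by
    simpa [mem_sphere_zero_iff_norm] using uq_norm y
  have memj : jq ∈ Metric.sphere (0 : Quaternion ℝ) 1 := by
    simpa [mem_sphere_zero_iff_norm] using jq_norm
  have hcomm : (⟨uq x1, memuq x1⟩ : Metric.sphere (0 : Quaternion ℝ) 1) * ⟨uq x2, memuq x2⟩ =
      (⟨uq x2, memuq x2⟩ : Metric.sphere (0 : Quaternion ℝ) 1) * ⟨uq x1, memuq x1⟩ := by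
    apply Subtype.ext
    show (uq x1 * uq x2 : Quaternion ℝ) = uq x2 * uq x1
    rw [uq_mul, uq_mul, add_comm]
  have hrelS : (⟨jq, memj⟩ : Metric.sphere (0 : Quaternion ℝ) 1) *
      ((⟨uq x1, memuq x1⟩ : Metric.sphere (0 : Quaternion ℝ) 1) ^ p *
        (⟨uq x2, memuq x2⟩ : Metric.sphere (0 : Quaternion ℝ) 1) ^ q) * (⟨jq, memj⟩ :
          Metric.sphere (0 : Quaternion ℝ) 1)⁻¹ =
      (⟨uq x1, memuq x1⟩ : Metric.sphere (0 : Quaternion ℝ) 1) ^ (p * a + q * b) *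
        (⟨uq x2, memuq x2⟩ : Metric.sphere (0 : Quaternion ℝ) 1) ^ (p * c + q * d) := by
    apply Subtype.ext
    push_cast
    exact hrel
  obtain ⟨ρ, hρ0, hρ1, hρ2⟩ := exists_hom_aux a b c d p q _ _ _ hcomm hrelS
  exact ⟨ρ, by rw [hρ0], by rw [hρ1], by rw [hρ2]⟩
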